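/- arXiv:1503.00239 — 3 statements merged into one kernel-verified Lean document; each statement's English description precedes it below -/
import Mathlib

section
/- Suppose ΔA > 0 and ΔB > 0, and let Π = I − |ψ⟩⟨ψ| be the orthogonal projection onto the orthogonal complement of ψ. Then for each sign s ∈ {+1, −1}, the vector ξ = (A/ΔA − s·i·B/ΔB)ψ satisfies ⟪ξ, Π ξ⟫ = 2 − s·i⟨[A,B]⟩/(ΔA·ΔB). -/
open scoped ComplexInnerProductSpace BigOperators

noncomputable section

variable {H : Type*} [NormedAddCommGroup H] [InnerProductSpace ℂ H]

/-- Expectation value ⟨A⟩ = Re ⟪ψ, A ψ⟫ of an operator in the state ψ. -/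
def expVal (ψ : H) (A : H →ₗ[ℂ] H) : ℝ := (⟪ψ, A ψ⟫).re

/-- Variance ΔA² = ⟨A²⟩ − ⟨A⟩². -/
def varOf (ψ : H) (A : H →ₗ[ℂ] H) : ℝ := (⟪ψ, A (A ψ)⟫).re - (expVal ψ A) ^ 2

/-- Standard deviation ΔA = √(ΔA²). -/
def stdDev (ψ : H) (A : H →ₗ[ℂ] H) : ℝ := Real.sqrt (varOf ψ A)

/-- The real number i⟨[A,B]⟩. -/
def commRe (ψ : H) (A B : H →ₗ[ℂ] H) : ℝ :=
  (Complex.I * ⟪ψ, (A ∘ₗ B - B ∘ₗ A) ψ⟫).re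

/-- The projection Π = I − |ψ⟩⟨ψ|. -/
def projPerp (ψ : H) : H →ₗ[ℂ] H :=
  LinearMap.id - ((innerSL ℂ ψ).smulRight ψ).toLinearMap

/-- The deviation operator Ă = A − ⟨A⟩I. -/
def devOp (ψ : H) (A : H →ₗ[ℂ] H) : H →ₗ[ℂ] H :=
  A - (expVal ψ A : ℂ) • LinearMap.id

/-- The operator C = −i[A,B]. -/
def opC (A B : H →ₗ[ℂ] H) : H →ₗ[ℂ] H := (-Complex.I) • (A ∘ₗ B - B ∘ₗ A)

/-- The operator F = ĂB̆ + B̆Ă. -/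
def opF (ψ : H) (A B : H →ₗ[ℂ] H) : H →ₗ[ℂ] H :=
  devOp ψ A ∘ₗ devOp ψ B + devOp ψ B ∘ₗ devOp ψ A

/-!
Since `Π` is the orthogonal projection onto `ψ^⊥`, `⟪ξ, Π ξ⟫ = ‖Π ξ‖²`, and `Π` sends `A ψ` to the
deviation vector `Ă ψ = A ψ - ⟨A⟩ ψ`, whose norm is `ΔA`. Hence `Π ξ = Ă ψ / ΔA - s i B̆ ψ / ΔB` has
squared norm `1 + s² + (2 s / ΔA ΔB) Im ⟪Ă ψ, B̆ ψ⟫`, and `Im ⟪Ă ψ, B̆ ψ⟫ = Im ⟪A ψ, B ψ⟫ = -i⟨[A,B]⟩ / 2`.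
-/

open Complex

theorem projPerp_apply (ψ x : H) : projPerp ψ x = x - ⟪ψ, x⟫ • ψ := rfl

theorem inner_projPerp_self {ψ : H} (hψ : ‖ψ‖ = 1) (x : H) :
    ⟪x, projPerp ψ x⟫ = ((‖projPerp ψ x‖ ^ 2 : ℝ) : ℂ) := by
  have hψψ : ⟪ψ, ψ⟫ = 1 := by simp [inner_self_eq_norm_sq_to_K, hψ]
  suffices ⟪x, projPerp ψ x⟫ = ⟪projPerp ψ x, projPerp ψ x⟫ by
    rw [this, inner_self_eq_norm_sq_to_K]; norm_cast
  simp only [projPerp_apply, inner_sub_left, inner_sub_right, inner_smul_left, inner_smul_right,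
    hψψ, inner_conj_symm]
  ring

section Deviation

variable {A B : H →ₗ[ℂ] H}

theorem LinearMap.IsSymmetric.inner_self_apply_eq_expVal (hA : A.IsSymmetric) (ψ : H) :
    ⟪ψ, A ψ⟫ = expVal ψ A :=
  (hA.coe_re_inner_self_apply ψ).symm

theorem LinearMap.IsSymmetric.inner_apply_self_eq_expVal (hA : A.IsSymmetric) (ψ : H) :
    ⟪A ψ, ψ⟫ = expVal ψ A := by
  rw [hA, hA.inner_self_apply_eq_expVal]

theorem projPerp_apply_eq_devOp_apply (hA : A.IsSymmetric) (ψ : H) :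
    projPerp ψ (A ψ) = devOp ψ A ψ := by
  rw [projPerp_apply, hA.inner_self_apply_eq_expVal]
  rfl

theorem norm_devOp_apply_sq (hA : A.IsSymmetric) {ψ : H} (hψ : ‖ψ‖ = 1) :
    ‖devOp ψ A ψ‖ ^ 2 = varOf ψ A := by
  have hAA : ‖A ψ‖ ^ 2 = (⟪ψ, A (A ψ)⟫).re := by
    rw [← hA, ← @inner_self_eq_norm_sq ℂ]; rfl
  rw [devOp, LinearMap.sub_apply, LinearMap.smul_apply, LinearMap.id_apply, @norm_sub_sq ℂ,
    inner_smul_right, hA.inner_apply_self_eq_expVal, norm_smul, hψ, hAA, varOf]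
  simp only [RCLike.mul_re, RCLike.re_to_complex, ofReal_re, RCLike.im_to_complex, ofReal_im,
    norm_real, Real.norm_eq_abs, mul_one, sq_abs]
  ring

theorem stdDev_eq_norm_devOp_apply (hA : A.IsSymmetric) {ψ : H} (hψ : ‖ψ‖ = 1) :
    stdDev ψ A = ‖devOp ψ A ψ‖ := by
  rw [stdDev, ← norm_devOp_apply_sq hA hψ, Real.sqrt_sq (norm_nonneg _)]

theorem im_inner_devOp_apply (hA : A.IsSymmetric) (hB : B.IsSymmetric) (ψ : H) :
    (⟪devOp ψ A ψ, devOp ψ B ψ⟫).im = (⟪A ψ, B ψ⟫).im := by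
  simp [devOp, hA.inner_apply_self_eq_expVal, hB.inner_self_apply_eq_expVal, ← ofReal_pow]

theorem commRe_eq_neg_two_mul_im_inner (hA : A.IsSymmetric) (hB : B.IsSymmetric) (ψ : H) :
    commRe ψ A B = -2 * (⟪A ψ, B ψ⟫).im := by
  have hAB : ⟪ψ, A (B ψ)⟫ = ⟪A ψ, B ψ⟫ := (hA ψ (B ψ)).symm
  have hBA : ⟪ψ, B (A ψ)⟫ = starRingEnd ℂ ⟪A ψ, B ψ⟫ := by rw [← hB, inner_conj_symm]
  rw [commRe, LinearMap.sub_apply, LinearMap.comp_apply, LinearMap.comp_apply, inner_sub_right,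
    hAB, hBA]
  simp only [mul_re, I_re, I_im, sub_im, conj_im, zero_mul, zero_sub, one_mul]
  ring

end Deviation

theorem norm_ofReal_smul_sub_ofReal_mul_I_smul_sq (p q : ℝ) (u v : H) :
    ‖(p : ℂ) • u - ((q : ℂ) * I) • v‖ ^ 2
      = p ^ 2 * ‖u‖ ^ 2 + q ^ 2 * ‖v‖ ^ 2 + 2 * p * q * (⟪u, v⟫).im := by
  rw [@norm_sub_sq ℂ, norm_smul, norm_smul, inner_smul_left, inner_smul_right]
  simp [mul_pow]
  ring

theorem proj_of_xi_gives_normalized_commutator_general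
    {H : Type*} [NormedAddCommGroup H] [InnerProductSpace ℂ H]
    (A B : H →ₗ[ℂ] H) (hA : A.IsSymmetric) (hB : B.IsSymmetric)
    (ψ : H) (hψ : ‖ψ‖ = 1)
    (hΔA : 0 < stdDev ψ A) (hΔB : 0 < stdDev ψ B)
    (s : ℝ) (hs : s = 1 ∨ s = -1) :
    ⟪(((stdDev ψ A : ℂ))⁻¹ • A - ((s : ℂ) * Complex.I * ((stdDev ψ B : ℂ))⁻¹) • B) ψ,
        projPerp ψ ((((stdDev ψ A : ℂ))⁻¹ • A
          - ((s : ℂ) * Complex.I * ((stdDev ψ B : ℂ))⁻¹) • B) ψ)⟫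
      = ((2 - s * commRe ψ A B / (stdDev ψ A * stdDev ψ B) : ℝ) : ℂ) := by
  have hcoeff : (s : ℂ) * I * (stdDev ψ B : ℂ)⁻¹ = ((s * (stdDev ψ B)⁻¹ : ℝ) : ℂ) * I := by
    push_cast; ring
  rw [inner_projPerp_self hψ, LinearMap.sub_apply, LinearMap.smul_apply, LinearMap.smul_apply,
    map_sub, map_smul, map_smul, projPerp_apply_eq_devOp_apply hA, projPerp_apply_eq_devOp_apply hB,
    hcoeff, ← ofReal_inv, norm_ofReal_smul_sub_ofReal_mul_I_smul_sq, im_inner_devOp_apply hA hB,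
    commRe_eq_neg_two_mul_im_inner hA hB, ← stdDev_eq_norm_devOp_apply hA hψ,
    ← stdDev_eq_norm_devOp_apply hB hψ]
  have hs2 : s ^ 2 = 1 := by rcases hs with rfl | rfl <;> norm_num
  congr 1
  field_simp
  rw [hs2]
  ring

theorem proj_of_xi_gives_normalized_commutator
    {H : Type*} [NormedAddCommGroup H] [InnerProductSpace ℂ H] [FiniteDimensional ℂ H]
    (A B : H →ₗ[ℂ] H) (hA : A.IsSymmetric) (hB : B.IsSymmetric)
    (ψ : H) (hψ : ‖ψ‖ = 1)
    (hΔA : 0 < stdDev ψ A) (hΔB : 0 < stdDev ψ B)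
    (s : ℝ) (hs : s = 1 ∨ s = -1) :
    ⟪(((stdDev ψ A : ℂ))⁻¹ • A - ((s : ℂ) * Complex.I * ((stdDev ψ B : ℂ))⁻¹) • B) ψ,
        projPerp ψ ((((stdDev ψ A : ℂ))⁻¹ • A
          - ((s : ℂ) * Complex.I * ((stdDev ψ B : ℂ))⁻¹) • B) ψ)⟫
      = ((2 - s * commRe ψ A B / (stdDev ψ A * stdDev ψ B) : ℝ) : ℂ) :=
  proj_of_xi_gives_normalized_commutator_general A B hA hB ψ hψ hΔA hΔB s hs
end
end

section
/- (Ordinary intelligent states saturate the Robertson relation.) Let γ be a nonzero real number and suppose ((A − ⟨A⟩I) + i·γ·(B − ⟨B⟩I)) ψ = 0, with ΔB > 0. Then ⟨F⟩ = 0, γ = ⟨C⟩/(2ΔB²), |γ| = ΔA/ΔB, and ΔA·ΔB = |⟨C⟩|/2, where C = −i[A,B] and F = (A − ⟨A⟩I)(B − ⟨B⟩I) + (B − ⟨B⟩I)(A − ⟨A⟩I). -/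
/-!
Write `a = Ăψ` and `b = B̆ψ`. For symmetric `A`, `B` and a unit vector `ψ` one has `ΔA = ‖a‖`,
`⟨F⟩ = 2 Re ⟪a, b⟫` and, because shifting `A` and `B` by scalars does not change `[A, B]`,
`⟨C⟩ = 2 Im ⟪a, b⟫`. The intelligent-state equation `a = -iγ b` makes `⟪a, b⟫ = iγ ‖b‖²` purely
imaginary and `‖a‖ = |γ| ‖b‖`, and the four identities follow.
-/

open scoped ComplexInnerProductSpace BigOperators

noncomputable section

variable {H : Type*} [NormedAddCommGroup H] [InnerProductSpace ℂ H]

section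

variable (ψ : H) {A B : H →ₗ[ℂ] H}

lemma devOp_apply (x : H) : devOp ψ A x = A x - (expVal ψ A : ℂ) • x := rfl

lemma devOp_isSymmetric (hA : A.IsSymmetric) : (devOp ψ A).IsSymmetric := by
  intro x y
  simp only [devOp_apply, inner_sub_left, inner_sub_right, inner_smul_left, inner_smul_right,
    Complex.conj_ofReal, hA x y]

lemma varOf_eq_norm_devOp_sq (hψ : ‖ψ‖ = 1) (hA : A.IsSymmetric) :
    varOf ψ A = ‖devOp ψ A ψ‖ ^ 2 := by
  have hAA : ‖A ψ‖ ^ 2 = (⟪ψ, A (A ψ)⟫).re := by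
    rw [← hA ψ (A ψ), ← RCLike.re_to_complex, inner_self_eq_norm_sq]
  have hcross : RCLike.re ⟪A ψ, (expVal ψ A : ℂ) • ψ⟫ = expVal ψ A ^ 2 := by
    rw [inner_smul_right, hA ψ ψ, RCLike.re_to_complex, Complex.re_ofReal_mul, ← expVal, sq]
  rw [devOp_apply, norm_sub_sq (𝕜 := ℂ), hAA, hcross, norm_smul, hψ, Complex.norm_real,
    Real.norm_eq_abs, mul_one, sq_abs, varOf]
  ring

lemma stdDev_eq_norm_devOp (hψ : ‖ψ‖ = 1) (hA : A.IsSymmetric) :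
    stdDev ψ A = ‖devOp ψ A ψ‖ := by
  rw [stdDev, varOf_eq_norm_devOp_sq ψ hψ hA, Real.sqrt_sq (norm_nonneg _)]

lemma expVal_opF (hA : A.IsSymmetric) (hB : B.IsSymmetric) :
    expVal ψ (opF ψ A B) = 2 * (⟪devOp ψ A ψ, devOp ψ B ψ⟫).re := by
  rw [expVal, opF, LinearMap.add_apply, LinearMap.comp_apply, LinearMap.comp_apply,
    inner_add_right, ← devOp_isSymmetric ψ hA ψ, ← devOp_isSymmetric ψ hB ψ, Complex.add_re,
    ← inner_conj_symm (devOp ψ B ψ), Complex.conj_re]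
  ring

lemma commutator_devOp :
    devOp ψ A ∘ₗ devOp ψ B - devOp ψ B ∘ₗ devOp ψ A = A ∘ₗ B - B ∘ₗ A := by
  ext x
  simp only [LinearMap.sub_apply, LinearMap.comp_apply, devOp_apply, map_sub, map_smul]
  module

lemma expVal_opC (hA : A.IsSymmetric) (hB : B.IsSymmetric) :
    expVal ψ (opC A B) = 2 * (⟪devOp ψ A ψ, devOp ψ B ψ⟫).im := by
  rw [expVal, opC, ← commutator_devOp ψ, LinearMap.smul_apply, LinearMap.sub_apply,
    LinearMap.comp_apply, LinearMap.comp_apply, inner_smul_right, inner_sub_right,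
    ← devOp_isSymmetric ψ hA ψ, ← devOp_isSymmetric ψ hB ψ,
    ← inner_conj_symm (devOp ψ B ψ), Complex.sub_conj]
  simp

end

section

variable {E : Type*} [NormedAddCommGroup E] [InnerProductSpace ℂ E] {a b : E} {γ : ℝ}

lemma norm_eq_of_add_I_smul_eq_zero (h : a + (Complex.I * γ) • b = 0) : ‖a‖ = |γ| * ‖b‖ := by
  rw [eq_neg_of_add_eq_zero_left h, norm_neg, norm_smul, norm_mul, Complex.norm_I, one_mul,
    Complex.norm_real, Real.norm_eq_abs]

lemma inner_eq_of_add_I_smul_eq_zero (h : a + (Complex.I * γ) • b = 0) :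
    ⟪a, b⟫ = ((γ * ‖b‖ ^ 2 : ℝ) : ℂ) * Complex.I := by
  rw [eq_neg_of_add_eq_zero_left h, inner_neg_left, inner_smul_left, inner_self_eq_norm_sq_to_K,
    map_mul, Complex.conj_I, Complex.conj_ofReal, RCLike.ofReal_eq_complex_ofReal]
  push_cast
  ring

end

theorem ordinary_intelligent_state_saturates_robertson_general
    {H : Type*} [NormedAddCommGroup H] [InnerProductSpace ℂ H]
    (A B : H →ₗ[ℂ] H) (hA : A.IsSymmetric) (hB : B.IsSymmetric)
    (ψ : H) (hψ : ‖ψ‖ = 1)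
    (γ : ℝ)
    (hγ : (devOp ψ A + (Complex.I * (γ : ℂ)) • devOp ψ B) ψ = 0)
    (hΔB : 0 < stdDev ψ B) :
    expVal ψ (opF ψ A B) = 0
      ∧ γ = expVal ψ (opC A B) / (2 * varOf ψ B)
      ∧ |γ| = stdDev ψ A / stdDev ψ B
      ∧ stdDev ψ A * stdDev ψ B = |expVal ψ (opC A B)| / 2 := by
  have hab : devOp ψ A ψ + (Complex.I * γ) • devOp ψ B ψ = 0 := hγ
  rw [stdDev_eq_norm_devOp ψ hψ hB] at hΔB ⊢
  rw [expVal_opF ψ hA hB, expVal_opC ψ hA hB, varOf_eq_norm_devOp_sq ψ hψ hB,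
    stdDev_eq_norm_devOp ψ hψ hA, norm_eq_of_add_I_smul_eq_zero hab,
    inner_eq_of_add_I_smul_eq_zero hab, Complex.mul_I_re, Complex.mul_I_im, Complex.ofReal_re,
    Complex.ofReal_im]
  refine ⟨by simp, by field_simp, by field_simp, ?_⟩
  rw [abs_mul, abs_mul, abs_two, abs_pow, abs_norm]
  ring

theorem ordinary_intelligent_state_saturates_robertson
    {H : Type*} [NormedAddCommGroup H] [InnerProductSpace ℂ H] [FiniteDimensional ℂ H]
    (A B : H →ₗ[ℂ] H) (hA : A.IsSymmetric) (hB : B.IsSymmetric)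
    (ψ : H) (hψ : ‖ψ‖ = 1)
    (γ : ℝ) (hγ0 : γ ≠ 0)
    (hγ : (devOp ψ A + (Complex.I * (γ : ℂ)) • devOp ψ B) ψ = 0)
    (hΔB : 0 < stdDev ψ B) :
    expVal ψ (opF ψ A B) = 0
      ∧ γ = expVal ψ (opC A B) / (2 * varOf ψ B)
      ∧ |γ| = stdDev ψ A / stdDev ψ B
      ∧ stdDev ψ A * stdDev ψ B = |expVal ψ (opC A B)| / 2 :=
  ordinary_intelligent_state_saturates_robertson_general A B hA hB ψ hψ γ hγ hΔB
end
end

section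
/- (State-independent variance-sum bound for qubit observables.) Define the Pauli matrices as complex 2×2 matrices σ₁ = [[0,1],[1,0]], σ₂ = [[0,−i],[i,0]], σ₃ = [[1,0],[0,−1]], and for v ∈ ℝ³ write v·σ = v₁σ₁ + v₂σ₂ + v₃σ₃. Let a, b ∈ ℝ³ be unit vectors and set A = a·σ, B = b·σ. Then for every 2×2 complex matrix ρ that is Hermitian, positive semidefinite, and of trace 1 (a qubit density matrix), with ⟨O⟩ = Re Tr(ρO) and ΔO² = ⟨O²⟩ − ⟨O⟩², one has ΔA² + ΔB² ≥ 1 − |a·b|. -/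
/-!
Write `ρ = (1 + r·σ)/2`: the Bloch vector `r` has `‖r‖ ≤ 1` because `det ρ ≥ 0`, the expectation
of `v·σ` is `v·r`, and `(v·σ)² = ‖v‖²`. The variance sum is therefore `2 - (a·r)² - (b·r)²`, and it
remains to bound `(a·r)² + (b·r)²` by `1 + |a·b|` — the largest eigenvalue of `a aᵀ + b bᵀ`.
-/

open scoped ComplexOrder

noncomputable section

def dot3 (a b : Fin 3 → ℝ) : ℝ := a 0 * b 0 + a 1 * b 1 + a 2 * b 2

def norm3 (a : Fin 3 → ℝ) : ℝ := Real.sqrt (dot3 a a)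

def cross3 (a b : Fin 3 → ℝ) : Fin 3 → ℝ :=
  ![a 1 * b 2 - a 2 * b 1, a 2 * b 0 - a 0 * b 2, a 0 * b 1 - a 1 * b 0]

def pauli1 : Matrix (Fin 2) (Fin 2) ℂ := !![0, 1; 1, 0]

def pauli2 : Matrix (Fin 2) (Fin 2) ℂ := !![0, -Complex.I; Complex.I, 0]

def pauli3 : Matrix (Fin 2) (Fin 2) ℂ := !![1, 0; 0, -1]

def dotPauli (v : Fin 3 → ℝ) : Matrix (Fin 2) (Fin 2) ℂ :=
  (v 0 : ℂ) • pauli1 + (v 1 : ℂ) • pauli2 + (v 2 : ℂ) • pauli3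

def mExp (ρ O : Matrix (Fin 2) (Fin 2) ℂ) : ℝ := ((ρ * O).trace).re

def mVar (ρ O : Matrix (Fin 2) (Fin 2) ℂ) : ℝ := mExp ρ (O * O) - (mExp ρ O) ^ 2

open scoped RealInnerProductSpace

/-- Cauchy–Schwarz for `v = ⟪a, r⟫ a + ⟪b, r⟫ b` against `r`, since `⟪v, r⟫ = ⟪a, r⟫² + ⟪b, r⟫²`
and `‖v‖² ≤ (1 + |⟪a, b⟫|) ⟪v, r⟫`. -/
theorem inner_sq_add_inner_sq_le {E : Type*} [NormedAddCommGroup E] [InnerProductSpace ℝ E]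
    {a b r : E} (ha : ‖a‖ = 1) (hb : ‖b‖ = 1) (hr : ‖r‖ ≤ 1) :
    ⟪a, r⟫ ^ 2 + ⟪b, r⟫ ^ 2 ≤ 1 + |⟪a, b⟫| := by
  set x := ⟪a, r⟫
  set y := ⟪b, r⟫
  set s := ⟪a, b⟫
  set v := x • a + y • b
  have haa : ⟪a, a⟫ = 1 := by rw [real_inner_self_eq_norm_sq, ha, one_pow]
  have hbb : ⟪b, b⟫ = 1 := by rw [real_inner_self_eq_norm_sq, hb, one_pow]
  have hrr : ⟪r, r⟫ ≤ 1 := by rw [real_inner_self_eq_norm_sq]; nlinarith [norm_nonneg r]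
  have hvr : ⟪v, r⟫ = x ^ 2 + y ^ 2 := by
    simp only [v, inner_add_left, real_inner_smul_left]; ring
  have hvv : ⟪v, v⟫ = x ^ 2 + y ^ 2 + 2 * s * x * y := by
    simp only [v, inner_add_left, inner_add_right, real_inner_smul_left, real_inner_smul_right,
      haa, hbb, real_inner_comm a b]
    ring
  have hxy : 2 * s * x * y ≤ |s| * (x ^ 2 + y ^ 2) := by
    have : |2 * x * y| ≤ x ^ 2 + y ^ 2 :=
      abs_le.2 ⟨by nlinarith [sq_nonneg (x + y)], by nlinarith [sq_nonneg (x - y)]⟩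
    calc 2 * s * x * y = s * (2 * x * y) := by ring
      _ ≤ |s * (2 * x * y)| := le_abs_self _
      _ ≤ |s| * (x ^ 2 + y ^ 2) := by rw [abs_mul]; gcongr
  have hQ : (x ^ 2 + y ^ 2) * (x ^ 2 + y ^ 2) ≤ (x ^ 2 + y ^ 2) * (1 + |s|) :=
    calc (x ^ 2 + y ^ 2) * (x ^ 2 + y ^ 2) = ⟪v, r⟫ * ⟪v, r⟫ := by rw [hvr]
      _ ≤ ⟪v, v⟫ * ⟪r, r⟫ := real_inner_mul_inner_self_le v r
      _ ≤ ⟪v, v⟫ := mul_le_of_le_one_right real_inner_self_nonneg hrr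
      _ ≤ (x ^ 2 + y ^ 2) * (1 + |s|) := by rw [hvv]; linarith
  rcases (add_nonneg (sq_nonneg x) (sq_nonneg y)).eq_or_lt with hQ0 | hQ0
  · rw [← hQ0]; positivity
  · exact le_of_mul_le_mul_left hQ hQ0

lemma dot3_eq_inner (a b : Fin 3 → ℝ) : dot3 a b = ⟪WithLp.toLp 2 a, WithLp.toLp 2 b⟫ := by
  simp only [dot3, PiLp.inner_apply, Fin.sum_univ_three, RCLike.inner_apply, conj_trivial]
  ring

lemma norm3_eq_norm (a : Fin 3 → ℝ) : norm3 a = ‖WithLp.toLp 2 a‖ := by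
  rw [norm_eq_sqrt_real_inner, norm3, dot3_eq_inner]

lemma dot3_self_eq_one {a : Fin 3 → ℝ} (ha : norm3 a = 1) : dot3 a a = 1 := by
  rw [dot3_eq_inner, real_inner_self_eq_norm_sq, ← norm3_eq_norm, ha, one_pow]

def blochVector (ρ : Matrix (Fin 2) (Fin 2) ℂ) : Fin 3 → ℝ :=
  ![mExp ρ pauli1, mExp ρ pauli2, mExp ρ pauli3]

lemma blochVector_eq (ρ : Matrix (Fin 2) (Fin 2) ℂ) :
    blochVector ρ =
      ![(ρ 0 1).re + (ρ 1 0).re, (ρ 1 0).im - (ρ 0 1).im, (ρ 0 0).re - (ρ 1 1).re] := by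
  ext k
  fin_cases k <;>
    simp [blochVector, mExp, pauli1, pauli2, pauli3, Matrix.trace_fin_two, Matrix.mul_apply] <;>
    ring

lemma Matrix.PosSemidef.dot3_blochVector_le_one {ρ : Matrix (Fin 2) (Fin 2) ℂ}
    (hρ : ρ.PosSemidef) (htr : ρ.trace = 1) :
    dot3 (blochVector ρ) (blochVector ρ) ≤ 1 := by
  have h10 : ρ 1 0 = star (ρ 0 1) := (hρ.1.apply 1 0).symm
  have h00 : (ρ 0 0).im = 0 := Complex.conj_eq_iff_im.mp (hρ.1.apply 0 0)
  have h11 : (ρ 1 1).im = 0 := Complex.conj_eq_iff_im.mp (hρ.1.apply 1 1)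
  have htr' : (ρ 0 0).re + (ρ 1 1).re = 1 := by
    simpa [Matrix.trace_fin_two] using congrArg Complex.re htr
  have hdet : (ρ 0 1).re ^ 2 + (ρ 0 1).im ^ 2 ≤ (ρ 0 0).re * (ρ 1 1).re := by
    have := (Complex.nonneg_iff.mp hρ.det_nonneg).1
    rw [Matrix.det_fin_two, h10] at this
    simp only [RCLike.star_def, Complex.sub_re, Complex.mul_re, h00, h11, Complex.conj_re,
      Complex.conj_im] at this
    nlinarith
  rw [blochVector_eq, h10]
  simp only [dot3, RCLike.star_def, Complex.conj_re, Complex.conj_im, Matrix.cons_val_zero,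
    Matrix.cons_val_one, Matrix.cons_val]
  nlinarith

lemma mExp_dotPauli (ρ : Matrix (Fin 2) (Fin 2) ℂ) (v : Fin 3 → ℝ) :
    mExp ρ (dotPauli v) = dot3 v (blochVector ρ) := by
  simp only [mExp, dotPauli, Matrix.mul_add, Matrix.mul_smul, Matrix.trace_add,
    Matrix.trace_smul, smul_eq_mul, Complex.add_re, Complex.re_ofReal_mul, dot3, blochVector]
  rfl

lemma dotPauli_mul_self (v : Fin 3 → ℝ) : dotPauli v * dotPauli v = (dot3 v v : ℂ) • 1 := by
  ext i j
  fin_cases i <;> fin_cases j <;>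
    simp [dotPauli, pauli1, pauli2, pauli3, dot3, Matrix.mul_apply] <;>
    ring_nf <;> simp [Complex.I_sq]

lemma mVar_dotPauli {ρ : Matrix (Fin 2) (Fin 2) ℂ} (htr : ρ.trace = 1) (v : Fin 3 → ℝ) :
    mVar ρ (dotPauli v) = dot3 v v - dot3 v (blochVector ρ) ^ 2 := by
  rw [mVar, mExp_dotPauli, dotPauli_mul_self, mExp, Matrix.mul_smul, Matrix.mul_one,
    Matrix.trace_smul, htr, smul_eq_mul, mul_one, Complex.ofReal_re]

theorem state_independent_variance_sum_qubit_general (a b : Fin 3 → ℝ)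
    (ha : norm3 a = 1) (hb : norm3 b = 1)
    (A B : Matrix (Fin 2) (Fin 2) ℂ)
    (hAdef : A = dotPauli a) (hBdef : B = dotPauli b)
    (ρ : Matrix (Fin 2) (Fin 2) ℂ)
    (hpos : ρ.PosSemidef) (htr : ρ.trace = 1) :
    mVar ρ A + mVar ρ B ≥ 1 - |dot3 a b| := by
  subst hAdef hBdef
  have hr : ‖WithLp.toLp 2 (blochVector ρ)‖ ≤ 1 := by
    rw [← norm3_eq_norm, norm3, Real.sqrt_le_one]
    exact hpos.dot3_blochVector_le_one htr
  have hbound := inner_sq_add_inner_sq_le (norm3_eq_norm a ▸ ha) (norm3_eq_norm b ▸ hb) hr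
  rw [← dot3_eq_inner, ← dot3_eq_inner, ← dot3_eq_inner] at hbound
  rw [mVar_dotPauli htr, mVar_dotPauli htr, dot3_self_eq_one ha, dot3_self_eq_one hb]
  linarith

theorem state_independent_variance_sum_qubit (a b : Fin 3 → ℝ)
    (ha : norm3 a = 1) (hb : norm3 b = 1)
    (A B : Matrix (Fin 2) (Fin 2) ℂ)
    (hAdef : A = dotPauli a) (hBdef : B = dotPauli b)
    (ρ : Matrix (Fin 2) (Fin 2) ℂ)
    (hherm : ρ.IsHermitian) (hpos : ρ.PosSemidef) (htr : ρ.trace = 1) :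
    mVar ρ A + mVar ρ B ≥ 1 - |dot3 a b| :=
  state_independent_variance_sum_qubit_general a b ha hb A B hAdef hBdef ρ hpos htr
end
end
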